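/- arXiv:2106.03751 — 5 statements merged into one kernel-verified Lean document; each statement's English description precedes it below -/
import Mathlib

section
/- Let V be a finite index set, M ∈ ℝ^{V×V} a symmetric matrix, and Δ = diag(f_v) a diagonal matrix with all f_v ≠ 0. For a tuple n = (n_v) of positive integers, let A[n] be the block V×V matrix whose (v,w) block is m_{vw}·1_{n_v×n_w} for v ≠ w, and whose (v,v) block is f_v · Id_{n_v} + m_{vv}·1_{n_v×n_v}. Then det A[n] = (∏_{v∈V} f_v^{n_v−1}) · det(Δ + Δ_n M), where Δ_n = diag(n_v). -/
/-- determinant of the blowup matrix. -/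
theorem blowup_det {V : Type*} [Fintype V] [DecidableEq V]
    (M : Matrix V V ℝ) (hM : M.IsSymm)
    (f : V → ℝ) (hf : ∀ v, f v ≠ 0)
    (n : V → ℕ) (hn : ∀ v, 1 ≤ n v) :
    (Matrix.of fun p q : Σ v : V, Fin (n v) =>
        if p = q then f p.1 + M p.1 p.1 else M p.1 q.1).det
      = (∏ v, f v ^ (n v - 1)) *
        (Matrix.diagonal f + Matrix.diagonal (fun v => (n v : ℝ)) * M).det := by
  classical
  set E : Matrix (Σ v : V, Fin (n v)) V ℝ :=
    Matrix.of fun p w => if p.1 = w then 1 else 0 with hE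
  set D : Matrix (Σ v : V, Fin (n v)) (Σ v : V, Fin (n v)) ℝ :=
    Matrix.diagonal fun p => f p.1 with hD
  set Dinv : Matrix (Σ v : V, Fin (n v)) (Σ v : V, Fin (n v)) ℝ :=
    Matrix.diagonal fun p => (f p.1)⁻¹ with hDinv
  have hDDinv : D * Dinv = 1 := by
    rw [hD, hDinv, Matrix.diagonal_mul_diagonal]
    convert Matrix.diagonal_one
    exact mul_inv_cancel₀ (hf _)
  have hA : (Matrix.of fun p q : Σ v : V, Fin (n v) =>
      if p = q then f p.1 + M p.1 p.1 else M p.1 q.1) = D + E * M * E.transpose := by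
    ext p q
    have : (E * M * E.transpose) p q = M p.1 q.1 := by
      simp [Matrix.mul_apply, Matrix.transpose_apply, hE, ite_mul, mul_ite,
        Finset.sum_ite_eq, Finset.sum_ite_eq']
    by_cases h : p = q
    · subst h; simp [this, hD]
    · simp [h, this, hD, Matrix.diagonal_apply_ne _ h]
  have hEDE : E.transpose * Dinv * E = Matrix.diagonal (fun v => (n v : ℝ) * (f v)⁻¹) := by
    ext v w
    rw [Matrix.mul_assoc, Matrix.mul_apply]
    have hterm : ∀ p : (v : V) × Fin (n v),
        E.transpose v p * (Dinv * E) p w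
          = if p.1 = v then (if p.1 = w then (f p.1)⁻¹ else 0) else 0 := by
      intro p
      simp only [Matrix.transpose_apply, hDinv, Matrix.diagonal_mul, hE, Matrix.of_apply]
      by_cases h1 : p.1 = v <;> by_cases h2 : p.1 = w <;> simp [h1, h2]
    rw [Finset.sum_congr rfl fun p _ => hterm p]
    rw [← Finset.univ_sigma_univ, Finset.sum_sigma]
    by_cases h : v = w
    · subst h
      rw [Matrix.diagonal_apply_eq]
      rw [Finset.sum_eq_single v]
      · simp [Finset.sum_const, mul_comm]
      · intro u _ hu
        simp [hu]
      · simp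
    · rw [Matrix.diagonal_apply_ne _ h]
      refine Finset.sum_eq_zero fun u _ => Finset.sum_eq_zero fun i _ => ?_
      by_cases h1 : u = v <;> by_cases h2 : u = w <;> simp_all
  have key : D + E * M * E.transpose = D * (1 + (Dinv * E * M) * E.transpose) := by
    rw [mul_add, mul_one]
    congr 1
    rw [← Matrix.mul_assoc, ← Matrix.mul_assoc, ← Matrix.mul_assoc, hDDinv, Matrix.one_mul]
  have hcomm : (1 + (Dinv * E * M) * E.transpose).det = (1 + E.transpose * (Dinv * E * M)).det :=
    Matrix.det_one_add_mul_comm _ _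
  have hre : E.transpose * (Dinv * E * M) = Matrix.diagonal (fun v => (n v : ℝ) * (f v)⁻¹) * M := by
    rw [← hEDE]; simp only [Matrix.mul_assoc]
  have hRHS : Matrix.diagonal f + Matrix.diagonal (fun v => (n v : ℝ)) * M
      = Matrix.diagonal f * (1 + Matrix.diagonal (fun v => (n v : ℝ) * (f v)⁻¹) * M) := by
    have hfn : (fun v => f v * ((n v : ℝ) * (f v)⁻¹)) = fun v => (n v : ℝ) := by
      funext v
      rw [mul_comm, mul_assoc, inv_mul_cancel₀ (hf v), mul_one]
    rw [mul_add, mul_one, ← Matrix.mul_assoc, Matrix.diagonal_mul_diagonal, hfn]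
  have hdetD : D.det = ∏ v, f v ^ n v := by
    rw [hD, Matrix.det_diagonal, ← Finset.univ_sigma_univ, Finset.prod_sigma]
    simp
  rw [hA, key, Matrix.det_mul, hcomm, hre, hdetD, hRHS, Matrix.det_mul,
    Matrix.det_diagonal]
  have : ∏ v, f v ^ n v = (∏ v, f v ^ (n v - 1)) * ∏ v, f v := by
    rw [← Finset.prod_mul_distrib]
    refine Finset.prod_congr rfl fun v _ => ?_
    rw [← pow_succ, Nat.sub_add_cancel (hn v)]
  rw [this]; ring
end

section
/- Let M be a real symmetric V×V matrix and Δ = diag(f_v) with all f_v ≠ 0, and p(n) = det(Δ + Δ_n M). Then the Hessian of p at the origin equals (∏_{v∈V} f_v) · Δ^{-1} (m m^T − M∘M) Δ^{-1}, where m = (m_{vv})_{v∈V} is the diagonal vector of M and M∘M is the entrywise (Hadamard) square of M. In particular, the (v,w) entry of the Hessian for v ≠ w is (∏_u f_u) · (m_{vv} m_{ww} − m_{vw}²)/(f_v f_w). -/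
/-- the Hessian of the blowup-polynomial at the origin equals
`(∏ f) Δ⁻¹ (m mᵀ − M∘M) Δ⁻¹` entrywise. -/
theorem blowup_poly_hessian {V : Type*} [Fintype V] [DecidableEq V]
    (M : Matrix V V ℝ) (hM : M.IsSymm)
    (f : V → ℝ) (hf : ∀ v, f v ≠ 0) (v w : V) :
    deriv (fun s : ℝ => deriv (fun t : ℝ =>
        (Matrix.diagonal f +
          Matrix.diagonal
            (Function.update (Function.update (0 : V → ℝ) v s) w t) * M).det) 0) 0
      = (∏ u, f u) * (M v v * M w w - (M v w) ^ 2) / (f v * f w) := by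
  classical
  rcases eq_or_ne v w with hvw | hvw
  · -- degenerate case `v = w`: the inner function does not depend on `s`
    subst hvw
    have h1 : (fun s : ℝ => deriv (fun t : ℝ =>
        (Matrix.diagonal f + Matrix.diagonal
            (Function.update (Function.update (0 : V → ℝ) v s) v t) * M).det) 0)
        = fun _ : ℝ => deriv (fun t : ℝ =>
        (Matrix.diagonal f + Matrix.diagonal
            (Function.update (0 : V → ℝ) v t) * M).det) 0 := by
      funext s
      simp [Function.update_idem]
    rw [h1, deriv_const]
    have h2 : M v v * M v v - M v v ^ 2 = 0 := by ring
    rw [h2, mul_zero, zero_div]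
  · -- main case `v ≠ w`
    set rest : Finset V := (Finset.univ.erase v).erase w with hrest
    have hwv : w ∈ Finset.univ.erase v := Finset.mem_erase.2 ⟨Ne.symm hvw, Finset.mem_univ w⟩
    have hn : ∀ s t : ℝ, ∀ u, Function.update (Function.update (0 : V → ℝ) v s) w t u
        = if u = w then t else if u = v then s else 0 := by
      intro s t u
      simp [Function.update_apply]
    -- abbreviations
    set P : Equiv.Perm V → ℝ := fun σ =>
      (Equiv.Perm.sign σ : ℝ) * ∏ u ∈ rest, Matrix.diagonal f u (σ u) with hP
    set aa : Equiv.Perm V → ℝ := fun σ => Matrix.diagonal f v (σ v) with haa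
    set bb : Equiv.Perm V → ℝ := fun σ => M v (σ v) with hbb
    set cc : Equiv.Perm V → ℝ := fun σ => Matrix.diagonal f w (σ w) with hcc
    set dd : Equiv.Perm V → ℝ := fun σ => M w (σ w) with hdd
    have expand : ∀ s t : ℝ,
        (Matrix.diagonal f + Matrix.diagonal
            (Function.update (Function.update (0 : V → ℝ) v s) w t) * M).det
          = ∑ σ : Equiv.Perm V, P σ * ((aa σ + s * bb σ) * (cc σ + t * dd σ)) := by
      intro s t
      rw [← Matrix.det_transpose, Matrix.det_apply']
      refine Finset.sum_congr rfl fun σ _ => ?_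
      have key : ∀ i : V,
          (Matrix.diagonal f + Matrix.diagonal
            (Function.update (Function.update (0 : V → ℝ) v s) w t) * M).transpose (σ i) i
          = Matrix.diagonal f i (σ i)
              + (if i = w then t else if i = v then s else 0) * M i (σ i) := by
        intro i
        rw [Matrix.transpose_apply, Matrix.add_apply, Matrix.diagonal_mul, hn]
      simp only [key]
      rw [← Finset.mul_prod_erase Finset.univ _ (Finset.mem_univ v),
          ← Finset.mul_prod_erase (Finset.univ.erase v) _ hwv]
      have hrestprod : ∏ u ∈ rest, (Matrix.diagonal f u (σ u)
            + (if u = w then t else if u = v then s else 0) * M u (σ u))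
          = ∏ u ∈ rest, Matrix.diagonal f u (σ u) := by
        refine Finset.prod_congr rfl fun u hu => ?_
        have h1 : u ≠ w := (Finset.mem_erase.mp hu).1
        have h2 : u ≠ v := (Finset.mem_erase.mp (Finset.mem_erase.mp hu).2).1
        simp [h1, h2]
      rw [← hrest, hrestprod, if_neg hvw, if_pos rfl, if_pos rfl]
      simp only [hP, haa, hbb, hcc, hdd]
      ring
    -- the determinant is an explicit bilinear-affine function of (s, t)
    have expand2 : ∀ s t : ℝ,
        (Matrix.diagonal f + Matrix.diagonal
            (Function.update (Function.update (0 : V → ℝ) v s) w t) * M).det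
          = ((∑ σ : Equiv.Perm V, P σ * (aa σ * cc σ))
              + (∑ σ : Equiv.Perm V, P σ * (bb σ * cc σ)) * s)
            + ((∑ σ : Equiv.Perm V, P σ * (aa σ * dd σ))
              + (∑ σ : Equiv.Perm V, P σ * (bb σ * dd σ)) * s) * t := by
      intro s t
      rw [expand s t]
      have h3 : ∀ σ : Equiv.Perm V, P σ * ((aa σ + s * bb σ) * (cc σ + t * dd σ))
          = (P σ * (aa σ * cc σ) + P σ * (bb σ * cc σ) * s)
            + (P σ * (aa σ * dd σ) + P σ * (bb σ * dd σ) * s) * t := fun σ => by ring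
      simp only [h3]
      simp only [Finset.sum_add_distrib, ← Finset.sum_mul]
    set C : ℝ := ∑ σ : Equiv.Perm V, P σ * (aa σ * dd σ) with hC
    set D : ℝ := ∑ σ : Equiv.Perm V, P σ * (bb σ * dd σ) with hD
    have inner : ∀ s : ℝ, deriv (fun t : ℝ =>
        (Matrix.diagonal f + Matrix.diagonal
            (Function.update (Function.update (0 : V → ℝ) v s) w t) * M).det) 0
        = C + D * s := by
      intro s
      have hfun : (fun t : ℝ =>
          (Matrix.diagonal f + Matrix.diagonal
            (Function.update (Function.update (0 : V → ℝ) v s) w t) * M).det)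
          = fun t : ℝ => ((∑ σ : Equiv.Perm V, P σ * (aa σ * cc σ))
              + (∑ σ : Equiv.Perm V, P σ * (bb σ * cc σ)) * s) + (C + D * s) * t :=
        funext fun t => expand2 s t
      rw [hfun]
      have hderiv : HasDerivAt (fun t : ℝ => ((∑ σ : Equiv.Perm V, P σ * (aa σ * cc σ))
              + (∑ σ : Equiv.Perm V, P σ * (bb σ * cc σ)) * s) + (C + D * s) * t)
          ((C + D * s) * 1) 0 :=
        (HasDerivAt.const_mul (C + D * s) (hasDerivAt_id 0)).const_add _
      rw [hderiv.deriv, mul_one]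
    have houter : (fun s : ℝ => deriv (fun t : ℝ =>
        (Matrix.diagonal f + Matrix.diagonal
            (Function.update (Function.update (0 : V → ℝ) v s) w t) * M).det) 0)
        = fun s : ℝ => C + D * s := funext inner
    rw [houter]
    have hderiv2 : HasDerivAt (fun s : ℝ => C + D * s) (D * 1) 0 :=
      (HasDerivAt.const_mul D (hasDerivAt_id 0)).const_add _
    rw [hderiv2.deriv, mul_one]
    -- now compute D
    have hclass : ∀ σ : Equiv.Perm V, (∀ u, u ≠ v → u ≠ w → σ u = u) →
        σ = 1 ∨ σ = Equiv.swap v w := by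
      intro σ hσ
      by_cases hv : σ v = v
      · left
        have hw : σ w = w := by
          by_contra hw
          have h1 : σ w ≠ v := fun h => hvw (σ.injective (h.trans hv.symm)).symm
          have h2 := hσ (σ w) h1 hw
          exact hw (σ.injective h2)
        ext u
        by_cases h1 : u = v
        · simp [h1, hv]
        by_cases h2 : u = w
        · simp [h2, hw]
        simp [hσ u h1 h2]
      · right
        have hv2 : σ v = w := by
          by_contra h
          have h2 := hσ (σ v) hv h
          exact hv (σ.injective h2)
        have hw2 : σ w = v := by
          have h1 : σ w ≠ w := fun h => hvw (σ.injective (hv2.trans h.symm))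
          by_contra h
          have h2 := hσ (σ w) h h1
          exact h1 (σ.injective h2)
        ext u
        by_cases h1 : u = v
        · simp [h1, hv2, Equiv.swap_apply_left]
        by_cases h2 : u = w
        · simp [h2, hw2, Equiv.swap_apply_right]
        simp [hσ u h1 h2, Equiv.swap_apply_of_ne_of_ne h1 h2]
    have hne1 : (1 : Equiv.Perm V) ≠ Equiv.swap v w := by
      intro h
      have : v = w := by
        have := congrArg (fun σ : Equiv.Perm V => σ v) h
        simpa [Equiv.swap_apply_left] using this
      exact hvw this
    have hzero : ∀ σ ∈ (Finset.univ : Finset (Equiv.Perm V)),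
        σ ∉ ({1, Equiv.swap v w} : Finset (Equiv.Perm V)) → P σ * (bb σ * dd σ) = 0 := by
      intro σ _ hσ
      rw [Finset.mem_insert, Finset.mem_singleton] at hσ
      push_neg at hσ
      have hnot : ¬ (∀ u, u ≠ v → u ≠ w → σ u = u) := by
        intro h
        rcases hclass σ h with h1 | h1
        · exact hσ.1 h1
        · exact hσ.2 h1
      push_neg at hnot
      obtain ⟨u, hu1, hu2, hu3⟩ := hnot
      have hurest : u ∈ rest :=
        Finset.mem_erase.2 ⟨hu2, Finset.mem_erase.2 ⟨hu1, Finset.mem_univ u⟩⟩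
      have : (∏ u ∈ rest, Matrix.diagonal f u (σ u)) = 0 :=
        Finset.prod_eq_zero hurest (Matrix.diagonal_apply_ne f (Ne.symm hu3))
      simp only [hP]
      rw [this, mul_zero, zero_mul]
    have hDval : D = (∏ u ∈ rest, f u) * (M v v * M w w)
        - (∏ u ∈ rest, f u) * (M v w * M w v) := by
      rw [hD, ← Finset.sum_subset
        (Finset.subset_univ ({1, Equiv.swap v w} : Finset (Equiv.Perm V))) hzero,
        Finset.sum_pair hne1]
      have hterm1 : P 1 * (bb 1 * dd 1) = (∏ u ∈ rest, f u) * (M v v * M w w) := by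
        simp only [hP, hbb, hdd]
        simp [Matrix.diagonal_apply_eq]
      have hterm2 : P (Equiv.swap v w) * (bb (Equiv.swap v w) * dd (Equiv.swap v w))
          = -((∏ u ∈ rest, f u) * (M v w * M w v)) := by
        simp only [hP, hbb, hdd]
        have hprodswap : ∏ u ∈ rest, Matrix.diagonal f u (Equiv.swap v w u)
            = ∏ u ∈ rest, f u := by
          refine Finset.prod_congr rfl fun u hu => ?_
          have h1 : u ≠ w := (Finset.mem_erase.mp hu).1
          have h2 : u ≠ v := (Finset.mem_erase.mp (Finset.mem_erase.mp hu).2).1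
          rw [Equiv.swap_apply_of_ne_of_ne h2 h1, Matrix.diagonal_apply_eq]
        simp only [hprodswap, Equiv.Perm.sign_swap hvw, Equiv.swap_apply_left,
          Equiv.swap_apply_right]
        push_cast
        ring
      rw [hterm1, hterm2]
      ring
    rw [hDval]
    have hprodall : (∏ u, f u) = f v * (f w * ∏ u ∈ rest, f u) := by
      rw [← Finset.mul_prod_erase Finset.univ f (Finset.mem_univ v),
        ← Finset.mul_prod_erase (Finset.univ.erase v) f hwv, ← hrest]
    rw [hprodall, hM.apply v w, eq_div_iff (mul_ne_zero (hf v) (hf w))]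
    ring
end

section
/- Let M be a real symmetric V×V matrix and suppose all f_v have the same sign (all positive or all negative) and are nonzero. Then the polynomial p(n) = det(diag(f) + diag(n)·M), viewed as a polynomial function of complex variables n = (n_v)_{v∈V}, is real-stable: if Im(n_v) > 0 for all v ∈ V, then p(n) ≠ 0. -/
/-- the blowup-polynomial is real-stable when all `f v` have
the same (nonzero) sign. -/
theorem blowup_poly_real_stable {V : Type*} [Fintype V] [DecidableEq V]
    [Nonempty V]
    (M : Matrix V V ℝ) (hM : M.IsSymm)
    (f : V → ℝ) (hf : (∀ v, 0 < f v) ∨ (∀ v, f v < 0)) :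
    ∀ z : V → ℂ, (∀ v, 0 < (z v).im) →
      (Matrix.diagonal (fun v => (f v : ℂ)) +
        Matrix.diagonal z * M.map (fun x => (x : ℂ))).det ≠ 0 := by
  intro z hz hdet
  obtain ⟨x, hx0, hx⟩ := Matrix.exists_mulVec_eq_zero_iff.mpr hdet
  set N := M.map (fun x => (x : ℂ)) with hN
  set y := N.mulVec x with hy
  have hzne : ∀ v, z v ≠ 0 := fun v h => by
    have := hz v; rw [h] at this; simp at this
  -- the key per-coordinate equation
  have key : ∀ v, (f v : ℂ) * x v + z v * y v = 0 := by
    intro v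
    have := congrFun hx v
    simpa [Matrix.add_mulVec, ← Matrix.mulVec_mulVec, Matrix.mulVec_diagonal,
      hy] using this
  -- y v = -(f v) * x v / z v
  have hyv : ∀ v, y v = -(f v : ℂ) * x v / z v := by
    intro v
    rw [eq_div_iff (hzne v)]
    linear_combination key v
  -- the quadratic form S
  set S := ∑ v, (starRingEnd ℂ) (x v) * y v with hS
  -- S is real since M is real symmetric
  have hSreal : S.im = 0 := by
    rw [← Complex.conj_eq_iff_im]
    have hSexp : S = ∑ v, ∑ u, (starRingEnd ℂ) (x v) * (M v u : ℂ) * x u := by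
      simp only [hS, hy, Matrix.mulVec, dotProduct, hN, Matrix.map_apply,
        Finset.mul_sum]
      exact Finset.sum_congr rfl fun v _ => Finset.sum_congr rfl fun u _ => by ring
    rw [hSexp]
    simp only [map_sum, map_mul, Complex.conj_conj, Complex.conj_ofReal]
    rw [Finset.sum_comm]
    refine Finset.sum_congr rfl fun u _ => Finset.sum_congr rfl fun v _ => ?_
    have : M v u = M u v := by
      conv_lhs => rw [← hM]
      rfl
    rw [this]; ring
  -- compute the imaginary part of S explicitly
  have him : S.im = ∑ v, f v * Complex.normSq (x v) * (z v).im / Complex.normSq (z v) := by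
    rw [hS, Complex.im_sum]
    refine Finset.sum_congr rfl fun v _ => ?_
    rw [hyv v]
    have h1 : (starRingEnd ℂ) (x v) * (-(f v : ℂ) * x v / z v)
        = ((-(f v * Complex.normSq (x v)) : ℝ) : ℂ) * (z v)⁻¹ := by
      push_cast [Complex.normSq_eq_conj_mul_self]
      ring
    rw [h1]
    simp only [Complex.mul_im, Complex.inv_im, Complex.inv_re, Complex.ofReal_re,
      Complex.ofReal_im]
    ring
  -- contradiction: the sum has a strict sign
  obtain ⟨v0, hv0⟩ := Function.ne_iff.mp hx0
  have hx0' : Complex.normSq (x v0) > 0 := by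
    simpa [Complex.normSq_pos] using hv0
  have hzsq : ∀ v, 0 < Complex.normSq (z v) := fun v =>
    Complex.normSq_pos.mpr (hzne v)
  rw [hSreal] at him
  rcases hf with hf | hf
  · have : (0:ℝ) < ∑ v, f v * Complex.normSq (x v) * (z v).im / Complex.normSq (z v) := by
      refine Finset.sum_pos' (fun v _ => ?_) ⟨v0, Finset.mem_univ v0, ?_⟩
      · have h1 := (hf v).le; have h2 := Complex.normSq_nonneg (x v)
        have h3 := (hz v).le; have h4 := (hzsq v).le
        positivity
      · have h1 := hf v0; have h3 := hz v0; have h4 := hzsq v0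
        positivity
    linarith [him]
  · have : (∑ v, f v * Complex.normSq (x v) * (z v).im / Complex.normSq (z v)) < 0 := by
      refine Finset.sum_neg' (fun v _ => ?_) ⟨v0, Finset.mem_univ v0, ?_⟩
      · have h1 := hf v; have h2 := (Complex.normSq_nonneg (x v))
        have h3 := hz v; have h4 := hzsq v
        apply div_nonpos_of_nonpos_of_nonneg
        · nlinarith [mul_nonneg h2 h3.le]
        · linarith
      · have h1 := hf v0; have h3 := hz v0; have h4 := hzsq v0
        apply div_neg_of_neg_of_pos
        · nlinarith [mul_pos hx0' h3]
        · exact h4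
    linarith [him]
end

section
/- Let M be a real symmetric V×V matrix with diag(f) having all entries of sign ε ∈ {±1}. If M is positive semidefinite, then the homogenized polynomial P(z_0, z) = det(z_0 · (ε·diag(f)) + diag(z) · (ε·M)) = det((ε Δ)^{1/2})·det(z_0·Id + diag(z)·C)·det((ε Δ)^{1/2}), with C = (εΔ)^{-1/2} M (εΔ)^{-1/2}, has all coefficients non-negative. -/
/-- if `M` is positive semidefinite then all coefficients of the
homogenized blowup-polynomial are non-negative (the coefficient of
`z_0^{k-|J|} ∏_{v∈J} z_v` is `∏_{v∉J} (ε f_v) · det(M_{J×J})`). -/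
theorem homogenized_coeffs_nonneg_of_posSemidef {V : Type*} [Fintype V] [DecidableEq V]
    (hk : 2 ≤ Fintype.card V)
    (M : Matrix V V ℝ) (hM : M.IsSymm) (hMpsd : M.PosSemidef)
    (ε : ℝ) (hε : ε = 1 ∨ ε = -1)
    (f : V → ℝ) (hf : ∀ v, 0 < ε * f v) :
    ∀ J : Finset V,
      0 ≤ (∏ v ∈ Jᶜ, ε * f v) *
          (M.submatrix (fun i : J => (i : V)) (fun i : J => (i : V))).det := by
  intro J
  apply mul_nonneg
  · exact Finset.prod_nonneg fun v _ => (hf v).le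
  · have h := hMpsd.submatrix (fun i : J => (i : V))
    rw [h.isHermitian.det_eq_prod_eigenvalues]
    exact Finset.prod_nonneg fun i _ => h.eigenvalues_nonneg i
end

section
/- Let M be a real symmetric V×V matrix, f : V → ℝ nowhere zero, and fix a positive integer tuple n = (n_v). Let M[n] be the blowup of M (block matrix with (v,w) block m_{vw}·1_{n_v×n_w}) and Δ[n] the block diagonal matrix with blocks f_v·Id_{n_v}. Then for variables m_{vi} (v ∈ V, 1 ≤ i ≤ n_v), setting n'_v = Σ_i m_{vi}, one has det(Δ[n] + diag(m)·M[n]) = (∏_{v∈V} f_v^{n_v − 1}) · det(Δ + diag(n')·M), where Δ = diag(f) and diag(n') = Matrix.diagonal n'. In words: the blowup-polynomial of a blowup is the original blowup-polynomial evaluated at the sums of the new variables, times a power of the f_v. -/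
/-- the blowup-polynomial of a blowup is the original
blowup-polynomial evaluated at the sums of the new variables, times a power
of the `f_v`. -/
theorem blowup_of_blowup_poly {V : Type*} [Fintype V] [DecidableEq V]
    (M : Matrix V V ℝ) (hM : M.IsSymm)
    (f : V → ℝ) (hf : ∀ v, f v ≠ 0)
    (n : V → ℕ) (hn : ∀ v, 1 ≤ n v)
    (m : (Σ v : V, Fin (n v)) → ℝ) :
    (Matrix.diagonal (fun p : Σ v : V, Fin (n v) => f p.1) +
        Matrix.diagonal m *
          Matrix.of (fun p q : Σ v : V, Fin (n v) => M p.1 q.1)).det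
      = (∏ v, f v ^ (n v - 1)) *
        (Matrix.diagonal f +
          Matrix.diagonal (fun v => ∑ i : Fin (n v), m ⟨v, i⟩) * M).det := by
  classical
  set e : Matrix (Σ v : V, Fin (n v)) V ℝ :=
    Matrix.of (fun p v => if p.1 = v then 1 else 0) with he
  set eT : Matrix V (Σ v : V, Fin (n v)) ℝ :=
    Matrix.of (fun v p => if p.1 = v then 1 else 0) with heT
  set g : (Σ v : V, Fin (n v)) → ℝ := fun p => m p / f p.1 with hg
  set h : V → ℝ := fun v => (∑ i : Fin (n v), m ⟨v, i⟩) / f v with hh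
  have hMeT : ∀ (v : V) (q : Σ v : V, Fin (n v)), (M * eT) v q = M v q.1 := by
    intro v q
    simp [Matrix.mul_apply, heT, mul_ite, mul_one, mul_zero, Finset.sum_ite_eq]
  have hX : Matrix.diagonal g * e
      = Matrix.of (fun (p : Σ v : V, Fin (n v)) v => if p.1 = v then g p else 0) := by
    ext p v
    simp [Matrix.diagonal_mul, he, mul_ite, mul_one, mul_zero]
  -- factorization of the big matrix
  have key : Matrix.diagonal (fun p : Σ v : V, Fin (n v) => f p.1) +
        Matrix.diagonal m * Matrix.of (fun p q : Σ v : V, Fin (n v) => M p.1 q.1)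
      = Matrix.diagonal (fun p : Σ v : V, Fin (n v) => f p.1) *
        (1 + (Matrix.diagonal g * e) * (M * eT)) := by
    have hmain : Matrix.diagonal m *
          Matrix.of (fun p q : Σ v : V, Fin (n v) => M p.1 q.1)
        = Matrix.diagonal (fun p : Σ v : V, Fin (n v) => f p.1) *
          ((Matrix.diagonal g * e) * (M * eT)) := by
      rw [hX]
      ext p q
      simp only [Matrix.diagonal_mul, Matrix.of_apply]
      rw [Matrix.mul_apply]
      simp only [Matrix.of_apply, hMeT, ite_mul, zero_mul, Finset.sum_ite_eq,
        Finset.mem_univ, if_true, hg]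
      rw [← mul_assoc, mul_comm (f p.1), div_mul_cancel₀ _ (hf p.1)]
    rw [mul_add, mul_one, hmain]
  have comp : eT * (Matrix.diagonal g * e) = Matrix.diagonal h := by
    rw [hX]
    ext v w
    simp only [Matrix.mul_apply, Matrix.of_apply, heT, Matrix.diagonal_apply,
      ite_mul, one_mul, zero_mul]
    by_cases hvw : v = w
    · subst hvw
      rw [if_pos rfl]
      have step : ∀ p ∈ Finset.univ,
          (if p.1 = v then (if p.1 = v then g p else 0) else 0)
            = if p.1 = v then g p else 0 := by
        intro p _
        by_cases hp : p.1 = v <;> simp [hp]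
      rw [Finset.sum_congr rfl step, ← Finset.univ_sigma_univ,
        Finset.sum_sigma, Finset.sum_eq_single v]
      · simp [hg, hh, Finset.sum_div]
      · intro u _ hu
        apply Finset.sum_eq_zero
        intro i _
        simp [hu]
      · simp
    · rw [if_neg hvw]
      apply Finset.sum_eq_zero
      intro p _
      by_cases h1 : p.1 = v
      · simp [h1, hvw]
      · simp [h1]
  have hfh : (fun v => f v * h v) = (fun v => ∑ i : Fin (n v), m ⟨v, i⟩) := by
    funext v
    show f v * ((∑ i : Fin (n v), m ⟨v, i⟩) / f v) = _
    rw [mul_comm, div_mul_cancel₀ _ (hf v)]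
  have small : Matrix.diagonal f +
        Matrix.diagonal (fun v => ∑ i : Fin (n v), m ⟨v, i⟩) * M
      = Matrix.diagonal f * (1 + Matrix.diagonal h * M) := by
    rw [mul_add, mul_one, ← Matrix.mul_assoc, Matrix.diagonal_mul_diagonal, hfh]
  rw [key, small, Matrix.det_mul, Matrix.det_mul,
    Matrix.det_one_add_mul_comm, Matrix.mul_assoc, comp,
    ← Matrix.det_one_add_mul_comm]
  have detD : (Matrix.diagonal (fun p : Σ v : V, Fin (n v) => f p.1)).det
      = ∏ v, f v ^ n v := by
    rw [Matrix.det_diagonal, ← Finset.univ_sigma_univ, Finset.prod_sigma]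
    simp
  rw [detD, Matrix.det_diagonal, ← mul_assoc]
  congr 1
  rw [← Finset.prod_mul_distrib]
  apply Finset.prod_congr rfl
  intro v _
  rw [← pow_succ, Nat.sub_add_cancel (hn v)]
end
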